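/- arXiv:math/0311334 — 2 statements merged into one kernel-verified Lean document; each statement's English description precedes it below -/
import Mathlib

section
/- The type B_n Tamari lattice possesses an unrefinable (maximal) chain of left modular elements, namely 0̂ ⋖ S_{n,1} ⋖ S_{n,2} ⋖ ... ⋖ S_{n,∞} ⋖ S_{n-1,1} ⋖ ... ⋖ S_{1,∞} = 1̂, where S_{i,t} has bracket vector with 0's before position i, t at position i, and ∞'s after position i. -/
/-- Condition (i) for type `B_n` bracket vectors: for `i < j` (0-based),
if `r_j - (j-i)` is a nonnegative integer then `r_i ≤ r_j - (j-i)`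
(equivalently `r_i + (j-i) ≤ r_j`; when `r_j = ∞` this holds trivially,
matching the convention that `∞` minus an integer is `∞`). -/
def condIB (n : ℕ) (r : Fin n → ℕ∞) : Prop :=
  ∀ i j : Fin n, i < j → (((j : ℕ) - (i : ℕ) : ℕ) : ℕ∞) ≤ r j →
    r i + (((j : ℕ) - (i : ℕ) : ℕ) : ℕ∞) ≤ r j

/-- Condition (ii) for type `B_n` bracket vectors: if `∞ > r_i ≥ i`
(1-based; here `i = k+1` for the 0-based index `k`) then `r_{n+i-r_i} = ∞`. -/
def condIIB (n : ℕ) (r : Fin n → ℕ∞) : Prop :=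
  ∀ (k : Fin n) (t : ℕ), r k = (t : ℕ∞) → ∀ _ht : (k : ℕ) + 1 ≤ t,
    r ⟨n + (k : ℕ) - t, by have := k.isLt; omega⟩ = ⊤

/-- Entries lie in `{0, …, n-1} ∪ {∞}`. -/
def entriesB (n : ℕ) (r : Fin n → ℕ∞) : Prop :=
  ∀ k, r k = ⊤ ∨ r k ≤ ((n - 1 : ℕ) : ℕ∞)

/-- A type `B_n` bracket vector. -/
def isBVec (n : ℕ) (r : Fin n → ℕ∞) : Prop :=
  entriesB n r ∧ condIB n r ∧ condIIB n r

/-- `u` is the join (least upper bound) of `a` and `b` in the type `B_n`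
Tamari lattice of bracket vectors (componentwise order). -/
def isJoinB (n : ℕ) (a b u : Fin n → ℕ∞) : Prop :=
  isBVec n u ∧ a ≤ u ∧ b ≤ u ∧
    ∀ h : Fin n → ℕ∞, isBVec n h → a ≤ h → b ≤ h → u ≤ h

/-- `m` is the meet (greatest lower bound) of `a` and `b` in the type `B_n`
Tamari lattice of bracket vectors (componentwise order). -/
def isMeetB (n : ℕ) (a b m : Fin n → ℕ∞) : Prop :=
  isBVec n m ∧ m ≤ a ∧ m ≤ b ∧
    ∀ h : Fin n → ℕ∞, isBVec n h → h ≤ a → h ≤ b → h ≤ m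

/-- The element `S_{i,t}` (0-based index `k`, so `i = k + 1`): bracket vector
with `0` in positions before `k`, `t` in position `k`, and `∞` after. -/
def Sel (n : ℕ) (k : Fin n) (t : ℕ∞) : Fin n → ℕ∞ := fun j =>
  if j < k then 0 else if j = k then t else ⊤

/-- `x` is left modular in the type `B_n` Tamari lattice:
`(Y ∨ x) ∧ Z = Y ∨ (x ∧ Z)` for all `Y < Z`. -/
def leftModB (n : ℕ) (x : Fin n → ℕ∞) : Prop :=
  ∀ Y Z : Fin n → ℕ∞, isBVec n Y → isBVec n Z → Y < Z →
    ∀ J M A B : Fin n → ℕ∞,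
      isJoinB n Y x J → isMeetB n x Z M →
      isMeetB n J Z A → isJoinB n Y M B → A = B

/-- The chain `0̂ ⋖ S_{n,1} ⋖ S_{n,2} ⋖ ⋯ ⋖ S_{n,∞} ⋖ S_{n-1,1} ⋖ ⋯ ⋖ S_{1,∞} = 1̂`,
enumerated by `m ∈ {0, 1, …, n²}`. -/
noncomputable def chainB (n : ℕ) (hn : 0 < n) (m : ℕ) : Fin n → ℕ∞ :=
  if m = 0 then fun _ => 0
  else
    Sel n ⟨n - 1 - (m - 1) / n, by have h := Nat.sub_le (n - 1) ((m - 1) / n); omega⟩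
      (if (m - 1) % n = n - 1 then ⊤ else (((m - 1) % n + 1 : ℕ) : ℕ∞))

/-!
Every member of the chain is some `S_{k,t}`, with `S_{k,∞} = S_{k-1,0}`. Write `x = S_{k,t}`,
`A = (Y ∨ x) ∧ Z` and `B = Y ∨ (x ∧ Z)`, so that `B ≤ A`. Joining with `x` makes every entry
after `k` infinite and leaves the entries before `k` alone, and meeting with `x` kills the
entries before `k` and leaves those after `k` alone; hence `A` and `B` agree with `Y` before `k`
and with `Z` after `k`. At position `k` one compares with bracket vectors obtained by splicing
a prefix, a value at `k` and a suffix: if `t ≤ B_k` then `(B_{≤k}, ∞, …)` bounds `Y ∨ x`; if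
`A_k ≤ t` then `(0, …, 0, A_{≥k})` lies below `x ∧ Z`; and `B_k < t < A_k` is impossible, since
either `(Y_{<k}, t, ∞, …)` is a bracket vector above `Y` and `x`, or some `i < k` violates
condition (i) for it, and then `(0, …, 0, k - i, Z_{>k})` lies below `x ∧ Z` while `B_k < k - i`.
For the covering relations, a bracket vector between `S_{k,a}` and `S_{k,b}` must equal
`S_{k,c}` for some entry `a < c < b`.
-/

variable {n : ℕ}

def splice (k : Fin n) (a : Fin n → ℕ∞) (s : ℕ∞) (b : Fin n → ℕ∞) : Fin n → ℕ∞ :=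
  fun j => if j < k then a j else if j = k then s else b j

section splice

variable {k j : Fin n} {a b a' b' : Fin n → ℕ∞} {s s' : ℕ∞}

lemma splice_apply_of_lt (h : j < k) : splice k a s b j = a j := if_pos h

lemma splice_apply_self : splice k a s b k = s := by simp [splice]

lemma splice_apply_of_gt (h : k < j) : splice k a s b j = b j := by
  simp [splice, h.not_gt, h.ne']

lemma splice_eq_self (k : Fin n) (r : Fin n → ℕ∞) : splice k r (r k) r = r := by
  funext j
  rcases lt_trichotomy j k with h | rfl | h
  · exact splice_apply_of_lt h
  · exact splice_apply_self
  · exact splice_apply_of_gt h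

lemma splice_mono (ha : ∀ j < k, a j ≤ a' j) (hs : s ≤ s') (hb : ∀ j, k < j → b j ≤ b' j) :
    splice k a s b ≤ splice k a' s' b' := by
  intro j
  rcases lt_trichotomy j k with h | rfl | h
  · simpa only [splice_apply_of_lt h] using ha j h
  · simpa only [splice_apply_self] using hs
  · simpa only [splice_apply_of_gt h] using hb j h

lemma Sel_eq_splice (k : Fin n) (t : ℕ∞) : Sel n k t = splice k 0 t ⊤ := rfl

end splice

lemma le_pred_of_entry {s : ℕ∞} {v : ℕ} (hs : s = ⊤ ∨ s ≤ ((n - 1 : ℕ) : ℕ∞)) (hv : s = v) :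
    v ≤ n - 1 := by
  subst hv
  rcases hs with h | h
  · exact absurd h (ENat.natCast_ne_top v)
  · exact_mod_cast h

lemma lt_condIIB_index (j : Fin n) {v : ℕ} (hv : v ≤ n - 1) (hjv : (j : ℕ) + 1 ≤ v) :
    j < (⟨n + (j : ℕ) - v, by have := j.isLt; omega⟩ : Fin n) := by
  show (j : ℕ) < n + (j : ℕ) - v
  omega

section isBVec_splice

variable {k : Fin n} {a b : Fin n → ℕ∞} {s : ℕ∞}

lemma isBVec_splice_top (ha : isBVec n a) (hs : s = ⊤ ∨ s ≤ ((n - 1 : ℕ) : ℕ∞))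
    (hak : a k ≤ s)
    (hI : ∀ i < k, (((k : ℕ) - (i : ℕ) : ℕ) : ℕ∞) ≤ s → a i + (((k : ℕ) - (i : ℕ) : ℕ) : ℕ∞) ≤ s) :
    isBVec n (splice k a s ⊤) := by
  have htop : ∀ p, a p = ⊤ → splice k a s ⊤ p = ⊤ := by
    intro p hp
    rcases lt_trichotomy p k with h | rfl | h
    · rw [splice_apply_of_lt h, hp]
    · rw [splice_apply_self]
      exact top_le_iff.mp (hp ▸ hak)
    · exact splice_apply_of_gt h
  refine ⟨fun j => ?_, fun i j hij hd => ?_, fun j v hv hjv => ?_⟩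
  · rcases lt_trichotomy j k with h | rfl | h
    · rw [splice_apply_of_lt h]
      exact ha.1 j
    · rwa [splice_apply_self]
    · exact Or.inl (splice_apply_of_gt h)
  · rcases lt_trichotomy j k with h | rfl | h
    · rw [splice_apply_of_lt h] at hd ⊢
      rw [splice_apply_of_lt (hij.trans h)]
      exact ha.2.1 i j hij hd
    · rw [splice_apply_self] at hd ⊢
      rw [splice_apply_of_lt hij]
      exact hI i hij hd
    · rw [splice_apply_of_gt h]
      exact le_top
  · rcases lt_trichotomy j k with h | rfl | h
    · rw [splice_apply_of_lt h] at hv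
      exact htop _ (ha.2.2 j v hv hjv)
    · rw [splice_apply_self] at hv
      exact splice_apply_of_gt (lt_condIIB_index j (le_pred_of_entry hs hv) hjv)
    · rw [splice_apply_of_gt h] at hv
      exact absurd hv.symm (ENat.natCast_ne_top v)

/-- For `s ≤ k` condition (ii) says nothing at position `k`; otherwise `hbig` lets it be
inherited from `b`. -/
lemma isBVec_splice_zero (hb : isBVec n b) (hsb : s ≤ b k)
    (hbig : ((k : ℕ) : ℕ∞) < s → s = b k) :
    isBVec n (splice k 0 s b) := by
  have hII : ∀ j : Fin n, k ≤ j → ∀ v : ℕ, b j = v → ∀ hjv : (j : ℕ) + 1 ≤ v,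
      splice k 0 s b ⟨n + (j : ℕ) - v, by have := j.isLt; omega⟩ = ⊤ := by
    intro j hkj v hv hjv
    have hlt := lt_condIIB_index j (le_pred_of_entry (hb.1 j) hv) hjv
    rw [splice_apply_of_gt (hkj.trans_lt hlt)]
    exact hb.2.2 j v hv hjv
  refine ⟨fun j => ?_, fun i j hij hd => ?_, fun j v hv hjv => ?_⟩
  · rcases lt_trichotomy j k with h | rfl | h
    · exact Or.inr (by simp [splice_apply_of_lt h])
    · rw [splice_apply_self]
      by_cases hks : ((j : ℕ) : ℕ∞) < s
      · exact hbig hks ▸ hb.1 j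
      · exact Or.inr ((not_lt.mp hks).trans (by exact_mod_cast (Nat.le_pred_of_lt j.isLt)))
    · rw [splice_apply_of_gt h]
      exact hb.1 j
  · rcases lt_trichotomy i k with h | rfl | h
    · rw [splice_apply_of_lt h, Pi.zero_apply, zero_add]
      exact hd
    · rw [splice_apply_of_gt hij] at hd ⊢
      rw [splice_apply_self]
      exact (add_le_add hsb le_rfl).trans (hb.2.1 i j hij hd)
    · rw [splice_apply_of_gt (h.trans hij)] at hd ⊢
      rw [splice_apply_of_gt h]
      exact hb.2.1 i j hij hd
  · rcases lt_trichotomy j k with h | rfl | h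
    · rw [splice_apply_of_lt h, Pi.zero_apply] at hv
      have : v = 0 := by exact_mod_cast hv.symm
      omega
    · rw [splice_apply_self] at hv
      have hks : ((j : ℕ) : ℕ∞) < s := by rw [hv]; exact_mod_cast hjv
      exact hII j le_rfl v ((hbig hks).symm.trans hv) hjv
    · rw [splice_apply_of_gt h] at hv
      exact hII j h.le v hv hjv

end isBVec_splice

section leftModB

variable {k : Fin n} {t : ℕ∞} {Y Z J M A B : Fin n → ℕ∞}

lemma isBVec_zero : isBVec n 0 := by
  refine ⟨fun _ => Or.inr zero_le, fun _ _ _ hd => by simpa using hd, fun _ v hv hjv => ?_⟩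
  have : v = 0 := by simpa using hv.symm
  omega

lemma isBVec_Sel (ht : t = ⊤ ∨ t ≤ ((n - 1 : ℕ) : ℕ∞)) : isBVec n (Sel n k t) :=
  isBVec_splice_top isBVec_zero ht zero_le fun _ _ hd => by rwa [zero_add]

lemma isJoinB.le_splice_top {a : Fin n → ℕ∞} {s : ℕ∞} (hJ : isJoinB n Y (Sel n k t) J)
    (ha : isBVec n a) (hYa : Y ≤ a) (hs : s = ⊤ ∨ s ≤ ((n - 1 : ℕ) : ℕ∞)) (hak : a k ≤ s)
    (hts : t ≤ s)
    (hI : ∀ i < k, (((k : ℕ) - (i : ℕ) : ℕ) : ℕ∞) ≤ s → a i + (((k : ℕ) - (i : ℕ) : ℕ) : ℕ∞) ≤ s) :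
    J ≤ splice k a s ⊤ := by
  refine hJ.2.2.2 _ (isBVec_splice_top ha hs hak hI) ?_ ?_
  · rw [← splice_eq_self k Y]
    exact splice_mono (fun j _ => hYa j) ((hYa k).trans hak) fun _ _ => le_top
  · exact splice_mono (fun _ _ => zero_le) hts fun _ _ => le_rfl

lemma isMeetB.splice_zero_le {b : Fin n → ℕ∞} {s : ℕ∞} (hM : isMeetB n (Sel n k t) Z M)
    (hb : isBVec n b) (hbZ : b ≤ Z) (hsb : s ≤ b k) (hbig : ((k : ℕ) : ℕ∞) < s → s = b k)
    (hst : s ≤ t) :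
    splice k 0 s b ≤ M := by
  refine hM.2.2.2 _ (isBVec_splice_zero hb hsb hbig) ?_ ?_
  · exact splice_mono (fun _ _ => le_rfl) hst fun _ _ => le_top
  · rw [← splice_eq_self k Z]
    exact splice_mono (fun _ _ => zero_le) (hsb.trans (hbZ k)) fun j _ => hbZ j

lemma meet_join_Sel_not_lt_lt (ht : t = ⊤ ∨ t ≤ ((n - 1 : ℕ) : ℕ∞)) (hY : isBVec n Y)
    (hZ : isBVec n Z) (hJ : isJoinB n Y (Sel n k t) J) (hM : isMeetB n (Sel n k t) Z M)
    (hA : isMeetB n J Z A) (hB : isJoinB n Y M B) : ¬(B k < t ∧ t < A k) := by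
  rintro ⟨hBt, htA⟩
  by_cases hI : ∀ i < k, (((k : ℕ) - (i : ℕ) : ℕ) : ℕ∞) ≤ t →
      Y i + (((k : ℕ) - (i : ℕ) : ℕ) : ℕ∞) ≤ t
  · have hJt := hJ.le_splice_top hY le_rfl ht ((hB.2.1 k).trans hBt.le) le_rfl hI k
    rw [splice_apply_self] at hJt
    exact htA.not_ge ((hA.2.1 k).trans hJt)
  push Not at hI
  obtain ⟨i, hik, hdt, hYi⟩ := hI
  have hBk : B k < (((k : ℕ) - (i : ℕ) : ℕ) : ℕ∞) := by
    by_contra! hdB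
    refine hYi.not_ge ?_
    calc Y i + (((k : ℕ) - (i : ℕ) : ℕ) : ℕ∞)
        ≤ B i + (((k : ℕ) - (i : ℕ) : ℕ) : ℕ∞) := add_le_add (hB.2.1 i) le_rfl
      _ ≤ B k := hB.1.2.1 i k hik hdB
      _ ≤ t := hBt.le
  have hdM := hM.splice_zero_le hZ le_rfl (hdt.trans (htA.le.trans (hA.2.2.1 k)))
    (fun h => absurd h (not_lt.mpr (by exact_mod_cast Nat.sub_le _ _))) hdt k
  rw [splice_apply_self] at hdM
  exact hBk.not_ge (hdM.trans (hB.2.2.1 k))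

lemma meet_join_Sel_apply_le (ht : t = ⊤ ∨ t ≤ ((n - 1 : ℕ) : ℕ∞)) (hY : isBVec n Y)
    (hZ : isBVec n Z) (hJ : isJoinB n Y (Sel n k t) J) (hM : isMeetB n (Sel n k t) Z M)
    (hA : isMeetB n J Z A) (hB : isJoinB n Y M B) : A k ≤ B k := by
  by_cases htB : t ≤ B k
  · have hJB := hJ.le_splice_top hB.1 hB.2.1 (hB.1.1 k) le_rfl htB
      (fun i hi hd => hB.1.2.1 i k hi hd) k
    rw [splice_apply_self] at hJB
    exact (hA.2.1 k).trans hJB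
  by_cases hAt : A k ≤ t
  · have hAM := hM.splice_zero_le hA.1 hA.2.2.1 le_rfl (fun _ => rfl) hAt k
    rw [splice_apply_self] at hAM
    exact hAM.trans (hB.2.2.1 k)
  exact (meet_join_Sel_not_lt_lt ht hY hZ hJ hM hA hB ⟨not_le.mp htB, not_le.mp hAt⟩).elim

theorem leftModB_Sel (ht : t = ⊤ ∨ t ≤ ((n - 1 : ℕ) : ℕ∞)) : leftModB n (Sel n k t) := by
  intro Y Z hY hZ hYZ J M A B hJ hM hA hB
  have hYA : Y ≤ A := hA.2.2.2 Y hY hJ.2.1 hYZ.le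
  have hMA : M ≤ A := hA.2.2.2 M hM.1 (hM.2.1.trans hJ.2.2.1) hM.2.2.1
  have hJY := hJ.le_splice_top hY le_rfl (Or.inl rfl) le_top le_top fun _ _ _ => le_top
  have hZM := hM.splice_zero_le hZ le_rfl zero_le (fun h => absurd h not_lt_zero) zero_le
  refine le_antisymm (fun j => ?_) (hB.2.2.2 A hA.1 hYA hMA)
  rcases lt_trichotomy j k with h | rfl | h
  · calc A j ≤ J j := hA.2.1 j
      _ ≤ Y j := by simpa only [splice_apply_of_lt h] using hJY j
      _ ≤ B j := hB.2.1 j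
  · exact meet_join_Sel_apply_le ht hY hZ hJ hM hA hB
  · calc A j ≤ Z j := hA.2.2.1 j
      _ ≤ M j := by simpa only [splice_apply_of_gt h] using hZM j
      _ ≤ B j := hB.2.2.1 j

end leftModB

def entrySucc (n v : ℕ) : ℕ∞ := if v = n - 1 then ⊤ else ((v + 1 : ℕ) : ℕ∞)

lemma lt_entrySucc (v : ℕ) : (v : ℕ∞) < entrySucc n v := by
  unfold entrySucc
  split_ifs
  · exact ENat.natCast_lt_top v
  · exact_mod_cast v.lt_succ_self

lemma entrySucc_isEntry {v : ℕ} (hv : v < n) :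
    entrySucc n v = ⊤ ∨ entrySucc n v ≤ ((n - 1 : ℕ) : ℕ∞) := by
  unfold entrySucc
  split_ifs with h
  · exact Or.inl rfl
  · exact Or.inr (by exact_mod_cast (by omega : v + 1 ≤ n - 1))

lemma not_lt_lt_entrySucc {v : ℕ} {e : ℕ∞} (he : e = ⊤ ∨ e ≤ ((n - 1 : ℕ) : ℕ∞)) :
    ¬((v : ℕ∞) < e ∧ e < entrySucc n v) := by
  rintro ⟨hve, hes⟩
  unfold entrySucc at hes
  split_ifs at hes with h
  · rcases he with rfl | he
    · exact hes.ne rfl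
    · exact hve.not_ge (h ▸ he)
  · lift e to ℕ using hes.ne_top
    have : v < e := by exact_mod_cast hve
    have : e < v + 1 := by exact_mod_cast hes
    omega

section Sel

variable {k : Fin n} {a b : ℕ∞} {c : Fin n → ℕ∞}

lemma Sel_strictMono (k : Fin n) : StrictMono (Sel n k) := by
  intro a b hab
  refine lt_of_le_of_ne (splice_mono (fun _ _ => le_rfl) hab.le fun _ _ => le_rfl) fun h => ?_
  have hk := congrFun h k
  rw [Sel_eq_splice, Sel_eq_splice, splice_apply_self, splice_apply_self] at hk
  exact hab.ne hk

lemma eq_Sel_of_le_of_le (h₁ : Sel n k a ≤ c) (h₂ : c ≤ Sel n k b) : c = Sel n k (c k) := by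
  funext j
  rcases lt_trichotomy j k with h | rfl | h
  · simpa [Sel, h] using h₂ j
  · simp [Sel]
  · simpa [Sel, h.not_gt, h.ne'] using h₁ j

lemma Sel_top_eq {k' : Fin n} (h : (k' : ℕ) + 1 = k) : Sel n k ⊤ = Sel n k' 0 := by
  funext j
  simp only [Sel, Fin.lt_def, Fin.ext_iff]
  split_ifs <;> first | rfl | omega

lemma not_Sel_lt_lt_Sel_entrySucc (hc : isBVec n c) (v : ℕ) :
    ¬(Sel n k v < c ∧ c < Sel n k (entrySucc n v)) := by
  rintro ⟨h₁, h₂⟩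
  have hc_eq := eq_Sel_of_le_of_le h₁.le h₂.le
  rw [hc_eq, (Sel_strictMono k).lt_iff_lt] at h₁ h₂
  exact not_lt_lt_entrySucc (hc.1 k) ⟨h₁, h₂⟩

end Sel

section chainB

variable (hn : 0 < n)

lemma chainB_zero : chainB n hn 0 = Sel n ⟨n - 1, by have := hn; omega⟩ 0 := by
  funext j
  have := j.isLt
  simp only [chainB, if_true, Sel, Fin.lt_def, Fin.ext_iff]
  split_ifs <;> first | rfl | omega

lemma chainB_succ (m : ℕ) :
    chainB n hn (m + 1) =
      Sel n ⟨n - 1 - m / n, by have := Nat.sub_le (n - 1) (m / n); omega⟩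
        (entrySucc n (m % n)) := by
  simp only [chainB, Nat.add_one_ne_zero, if_false, Nat.add_sub_cancel]
  rfl

lemma chainB_of_lt {m : ℕ} (hm : m < n * n) :
    chainB n hn m =
      Sel n ⟨n - 1 - m / n, by have := Nat.sub_le (n - 1) (m / n); omega⟩ (m % n) := by
  cases m with
  | zero => simp [chainB_zero hn]
  | succ m =>
    have hqr := Nat.div_add_mod m n
    have hr := Nat.mod_lt m hn
    have hq : m / n < n := Nat.div_lt_of_lt_mul (by omega)
    rw [chainB_succ hn, entrySucc]
    split_ifs with h
    · obtain ⟨hq', hr'⟩ : (m + 1) / n = m / n + 1 ∧ (m + 1) % n = 0 :=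
        (Nat.div_mod_unique hn).mpr ⟨by rw [mul_add]; omega, hn⟩
      have hq1 : m / n + 1 < n :=
        Nat.lt_of_mul_lt_mul_left (a := n) (by rw [mul_add]; omega)
      simp only [hq', hr', Nat.cast_zero]
      exact Sel_top_eq (by simp only; omega)
    · obtain ⟨hq', hr'⟩ : (m + 1) / n = m / n ∧ (m + 1) % n = m % n + 1 :=
        (Nat.div_mod_unique hn).mpr ⟨by omega, by omega⟩
      simp only [hq', hr']

lemma chainB_mul_self_apply (j : Fin n) : chainB n hn (n * n) j = ⊤ := by
  have hnn : n * n = n * (n - 1) + n := by rw [← Nat.mul_add_one, Nat.sub_one_add_one hn.ne']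
  obtain ⟨hq, hr⟩ : (n * n - 1) / n = n - 1 ∧ (n * n - 1) % n = n - 1 :=
    (Nat.div_mod_unique hn).mpr ⟨by omega, by omega⟩
  have hsucc := chainB_succ hn (n * n - 1)
  rw [Nat.sub_add_cancel (by omega)] at hsucc
  simp [hsucc, hq, hr, entrySucc, Sel, Fin.lt_def]

lemma exists_chainB_eq_Sel (m : ℕ) :
    ∃ k t, (t = ⊤ ∨ t ≤ ((n - 1 : ℕ) : ℕ∞)) ∧ chainB n hn m = Sel n k t := by
  cases m with
  | zero => exact ⟨_, 0, Or.inr zero_le, chainB_zero hn⟩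
  | succ m => exact ⟨_, _, entrySucc_isEntry (Nat.mod_lt m hn), chainB_succ hn m⟩

end chainB

/-- The type `B_n` Tamari lattice possesses an unrefinable (maximal) chain of
left modular elements, namely `0̂ ⋖ S_{n,1} ⋖ ⋯ ⋖ S_{n,∞} ⋖ S_{n-1,1} ⋖ ⋯ ⋖ S_{1,∞} = 1̂`:
every member of the chain is a bracket vector and is left modular, the chain
starts at the bottom element and ends at the top element, and each step is a
covering relation. -/
theorem tamariB_leftModular_chain (n : ℕ) (hn : 0 < n) :
    (∀ m ≤ n * n, isBVec n (chainB n hn m) ∧ leftModB n (chainB n hn m)) ∧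
    (∀ r : Fin n → ℕ∞, isBVec n r → chainB n hn 0 ≤ r ∧ r ≤ chainB n hn (n * n)) ∧
    (∀ m < n * n, chainB n hn m < chainB n hn (m + 1) ∧
      ∀ c : Fin n → ℕ∞, isBVec n c →
        ¬(chainB n hn m < c ∧ c < chainB n hn (m + 1))) := by
  refine ⟨fun m _ => ?_, fun r _ => ⟨fun j => ?_, fun j => ?_⟩, fun m hm => ?_⟩
  · obtain ⟨k, t, ht, h⟩ := exists_chainB_eq_Sel hn m
    rw [h]
    exact ⟨isBVec_Sel ht, leftModB_Sel ht⟩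
  · simp [chainB]
  · rw [chainB_mul_self_apply hn j]
    exact le_top
  · rw [chainB_of_lt hn hm, chainB_succ hn m]
    exact ⟨Sel_strictMono _ (lt_entrySucc _), fun c hc => not_Sel_lt_lt_Sel_entrySucc hc _⟩
end

section
/- For the type A_n Tamari lattice on bracket vectors: given any (n+1)-tuple x with 0 ≤ x_i ≤ i-1 for all i, there is a unique bracket vector ↑(x) such that for every bracket vector r, r ≥ x componentwise if and only if r ≥ ↑(x) componentwise; consequently the join of two bracket vectors r, s equals ↑(max(r,s)). -/
/-- Condition (i) for type `A_n` bracket vectors (0-based indices). -/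
def condIA (n : ℕ) (r : Fin (n + 1) → ℕ) : Prop :=
  ∀ i j : Fin (n + 1), i < j → (j : ℕ) - (i : ℕ) ≤ r j →
    r i + ((j : ℕ) - (i : ℕ)) ≤ r j

/-- Condition (ii): `0 ≤ r_i ≤ i - 1` (0-based: `r k ≤ k`). -/
def entriesA (n : ℕ) (r : Fin (n + 1) → ℕ) : Prop :=
  ∀ k : Fin (n + 1), r k ≤ (k : ℕ)

/-- A type `A_n` bracket vector. -/
def isAVec (n : ℕ) (r : Fin (n + 1) → ℕ) : Prop := condIA n r ∧ entriesA n r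

/-- Auxiliary: the least bracket vector above `x`. -/
noncomputable def upA (n : ℕ) (x : Fin (n + 1) → ℕ) : Fin (n + 1) → ℕ :=
  fun k => sInf ((fun r : Fin (n + 1) → ℕ => r k) '' {r | isAVec n r ∧ x ≤ r})

lemma topA_vec (n : ℕ) : isAVec n (fun k : Fin (n + 1) => (k : ℕ)) := by
  refine ⟨fun i j hij hji => ?_, fun k => le_refl _⟩
  have hlt : (i : ℕ) < (j : ℕ) := hij
  show (i : ℕ) + ((j : ℕ) - (i : ℕ)) ≤ (j : ℕ)
  omega

lemma upA_ne (n : ℕ) (x : Fin (n + 1) → ℕ) (hx : entriesA n x) (k : Fin (n + 1)) :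
    ((fun r : Fin (n + 1) → ℕ => r k) '' {r | isAVec n r ∧ x ≤ r}).Nonempty :=
  ⟨_, ⟨_, ⟨topA_vec n, fun k => hx k⟩, rfl⟩⟩

lemma upA_le (n : ℕ) (x : Fin (n + 1) → ℕ) {r : Fin (n + 1) → ℕ}
    (hr : isAVec n r) (hxr : x ≤ r) : upA n x ≤ r :=
  fun k => Nat.sInf_le ⟨r, ⟨hr, hxr⟩, rfl⟩

lemma le_upA (n : ℕ) (x : Fin (n + 1) → ℕ) (hx : entriesA n x) : x ≤ upA n x := by
  intro k
  refine le_csInf (upA_ne n x hx k) ?_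
  rintro m ⟨r, ⟨hr, hxr⟩, rfl⟩
  exact hxr k

lemma upA_vec (n : ℕ) (x : Fin (n + 1) → ℕ) (hx : entriesA n x) :
    isAVec n (upA n x) := by
  constructor
  · intro i j hij hji
    refine le_csInf (upA_ne n x hx j) ?_
    rintro m ⟨r, ⟨hr, hxr⟩, rfl⟩
    have h1 : upA n x j ≤ r j := upA_le n x hr hxr j
    have h2 : upA n x i ≤ r i := upA_le n x hr hxr i
    have h3 : r i + ((j : ℕ) - (i : ℕ)) ≤ r j := hr.1 i j hij (le_trans hji h1)
    show upA n x i + ((j : ℕ) - (i : ℕ)) ≤ r j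
    omega
  · intro k
    exact upA_le n x (r := fun k : Fin (n + 1) => (k : ℕ)) (topA_vec n) (fun j => hx j) k

/-- For any tuple `x` with `0 ≤ x_i ≤ i-1` there is a unique bracket vector `↑(x)`
such that for every bracket vector `r`, `r ≥ x` iff `r ≥ ↑(x)`.  Consequently the
join of two bracket vectors `r, s` is `↑(max(r,s))`: any `u` with the defining
property of `↑(max(r,s))` is the least upper bound of `r` and `s` among bracket
vectors. -/
theorem tamariA_up_exists_unique (n : ℕ) :
    (∀ x : Fin (n + 1) → ℕ, entriesA n x →
      ∃! u : Fin (n + 1) → ℕ, isAVec n u ∧ ∀ r, isAVec n r → (x ≤ r ↔ u ≤ r)) ∧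
    (∀ r s : Fin (n + 1) → ℕ, isAVec n r → isAVec n s →
      ∀ u : Fin (n + 1) → ℕ,
        (isAVec n u ∧ ∀ h, isAVec n h → ((fun k => max (r k) (s k)) ≤ h ↔ u ≤ h)) →
        r ≤ u ∧ s ≤ u ∧ ∀ h, isAVec n h → r ≤ h → s ≤ h → u ≤ h) := by
  constructor
  · intro x hx
    refine ⟨upA n x, ⟨upA_vec n x hx, fun r hr =>
      ⟨fun hxr => upA_le n x hr hxr, fun hur => le_trans (le_upA n x hx) hur⟩⟩, ?_⟩
    rintro v ⟨hv, hiff⟩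
    have hxv : x ≤ v := (hiff v hv).2 (le_refl v)
    exact le_antisymm ((hiff _ (upA_vec n x hx)).1 (le_upA n x hx)) (upA_le n x hv hxv)
  · rintro r s hr hs u ⟨hu, hiff⟩
    have h1 : (fun k => max (r k) (s k)) ≤ u := (hiff u hu).2 (le_refl u)
    refine ⟨fun k => le_trans (le_max_left _ _) (h1 k),
      fun k => le_trans (le_max_right _ _) (h1 k), ?_⟩
    intro h hh hrh hsh
    exact (hiff h hh).1 (fun k => max_le (hrh k) (hsh k))
end
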